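/- arXiv:1403.1600 — 2 statements merged into one kernel-verified Lean document; each statement's English description precedes it below -/
import Mathlib

section
/- Suppose Φ is a (possibly randomized, measurable) estimator and B, B̂ are two parameter values such that the conditional distribution of the observation R given B agrees with that given B̂ on an event 𝓡, and P(R ∈ 𝓡 | B) ≥ δ, and P(R ∈ 𝓡 | B̂) ≥ δ. If P(Φ(R) = B | B) > 1 - δ/3, then P(Φ(R) = B̂ | B̂) ≤ 1 - 2δ/3. -/
open MeasureTheory

/-- Two-point impossibility argument.  If the distributions of the observation under
parameters `B` and `B'` agree on a measurable event `𝓡` having probability at least `δ`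
under both, `B ≠ B'`, and the (measurable) estimator `Φ` satisfies
`P(Φ(R) = B | B) > 1 - δ/3`, then `P(Φ(R) = B' | B') ≤ 1 - 2δ/3`. -/
theorem stmt_6 {Ω θ : Type*} [MeasurableSpace Ω] [MeasurableSpace θ]
    [MeasurableSingletonClass θ]
    (PB PB' : Measure Ω) [IsProbabilityMeasure PB] [IsProbabilityMeasure PB']
    (𝓡 : Set Ω) (h𝓡 : MeasurableSet 𝓡)
    (hagree : PB.restrict 𝓡 = PB'.restrict 𝓡)
    (δ : ℝ) (hδ0 : 0 < δ) (hδ1 : δ ≤ 1)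
    (hB𝓡 : ENNReal.ofReal δ ≤ PB 𝓡) (hB'𝓡 : ENNReal.ofReal δ ≤ PB' 𝓡)
    (Φ : Ω → θ) (hΦ : Measurable Φ) (B B' : θ) (hBB' : B ≠ B')
    (h : ENNReal.ofReal (1 - δ / 3) < PB {ω | Φ ω = B}) :
    PB' {ω | Φ ω = B'} ≤ ENNReal.ofReal (1 - 2 * δ / 3) := by
  set A : Set Ω := {ω | Φ ω = B} with hA
  have hAmeas : MeasurableSet A := hΦ (measurableSet_singleton B)
  -- Step 1: PB (A ∩ 𝓡) ≥ 2δ/3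
  have hkey : ENNReal.ofReal (2 * δ / 3) ≤ PB (A ∩ 𝓡) := by
    have hsum : PB (A ∪ 𝓡) + PB (A ∩ 𝓡) = PB A + PB 𝓡 :=
      measure_union_add_inter' hAmeas 𝓡
    have h1 : ENNReal.ofReal (2 * δ / 3) + PB (A ∪ 𝓡)
        ≤ PB A + PB 𝓡 := by
      calc ENNReal.ofReal (2 * δ / 3) + PB (A ∪ 𝓡)
          ≤ ENNReal.ofReal (2 * δ / 3) + 1 := by
            gcongr; exact prob_le_one
        _ = ENNReal.ofReal (2 * δ / 3) + ENNReal.ofReal 1 := by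
            rw [ENNReal.ofReal_one]
        _ = ENNReal.ofReal (1 - δ / 3) + ENNReal.ofReal δ := by
            rw [← ENNReal.ofReal_add (by positivity) (by norm_num),
              ← ENNReal.ofReal_add (by linarith) hδ0.le]
            ring_nf
        _ ≤ PB A + PB 𝓡 := add_le_add h.le hB𝓡
    have hfin : PB (A ∪ 𝓡) ≠ ⊤ := measure_ne_top _ _
    rw [← hsum, add_comm (PB (A ∪ 𝓡))] at h1
    exact ENNReal.le_of_add_le_add_right hfin h1
  -- Step 2: agreement transfers it to PB'
  have hkey' : ENNReal.ofReal (2 * δ / 3) ≤ PB' (A ∩ 𝓡) := by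
    have := congrArg (fun μ : Measure Ω => μ A) hagree
    simp only [Measure.restrict_apply hAmeas] at this
    rwa [this] at hkey
  -- Step 3: disjointness
  have hdisj : Disjoint {ω | Φ ω = B'} (A ∩ 𝓡) := by
    refine Set.disjoint_left.mpr ?_
    rintro ω (hω : Φ ω = B') ⟨(hω' : Φ ω = B), -⟩
    exact hBB' (hω'.symm.trans hω)
  have hU : PB' {ω | Φ ω = B'} + PB' (A ∩ 𝓡) ≤ 1 := by
    rw [← measure_union hdisj (hAmeas.inter h𝓡)]
    exact prob_le_one
  have h2 : PB' {ω | Φ ω = B'} + ENNReal.ofReal (2 * δ / 3) ≤ 1 :=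
    le_trans (add_le_add le_rfl hkey') hU
  have h3 : PB' {ω | Φ ω = B'} ≤ 1 - ENNReal.ofReal (2 * δ / 3) :=
    ENNReal.le_sub_of_add_le_right ENNReal.ofReal_ne_top h2
  calc PB' {ω | Φ ω = B'} ≤ 1 - ENNReal.ofReal (2 * δ / 3) := h3
    _ = ENNReal.ofReal (1 - 2 * δ / 3) := by
        rw [← ENNReal.ofReal_one, ← ENNReal.ofReal_sub _ (by positivity)]
end

section
/- Let a U/K × M/K block of entries be revealed independently, where entries in rows/columns containing an information-rich user or item are revealed with probability β and all other entries with probability α. If α ≤ K²/(UM) and β ≤ K/(η(M+U) - η²K), with at most η information-rich users and at most η information-rich items, then the probability that every entry of the block is erased is at least (1-β)^(ηM/K + ηU/K - η²) · (1-α)^((U/K - η)(M/K - η)), and for M, U sufficiently large (with U = Θ(M), K = O(M/log M)) this probability is at least e^(-2.2). -/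
private lemma block_count (η u m : ℕ) (hu : η ≤ u) (hm : η ≤ m) :
    (η * m + η * u - η ^ 2) + (u - η) * (m - η) = u * m := by
  obtain ⟨a, rfl⟩ := Nat.exists_eq_add_of_le hu
  obtain ⟨b, rfl⟩ := Nat.exists_eq_add_of_le hm
  have h1 : η ^ 2 ≤ η * (η + b) + η * (η + a) := by
    calc η ^ 2 = η * η := pow_two η
      _ ≤ η * (η + b) := Nat.mul_le_mul_left η (Nat.le_add_right _ _)
      _ ≤ _ := Nat.le_add_right _ _
  zify [h1, Nat.le_add_right]
  ring

private lemma key_pow (n : ℕ) (hn : 11 ≤ n) (x : ℝ) (hx0 : 0 ≤ x) (hx : x ≤ 1 / n) :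
    Real.exp (-1.1) ≤ (1 - x) ^ n := by
  have hnR : (11:ℝ) ≤ n := by exact_mod_cast hn
  have hn0 : (0:ℝ) < n := by linarith
  set y : ℝ := 1 / n with hy
  have hy0 : 0 < y := by positivity
  have hy11 : y ≤ 1 / 11 := one_div_le_one_div_of_le (by norm_num) hnR
  have hny : (n : ℝ) * y = 1 := by
    rw [hy, mul_one_div, div_self hn0.ne']
  have h1 : 1 + 1.1 * y ≤ Real.exp (1.1 * y) := by
    have := Real.add_one_le_exp (1.1 * y); linarith
  have hpos : (0:ℝ) < 1 + 1.1 * y := by positivity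
  have h2 : Real.exp (-(1.1 * y)) ≤ 1 - y := by
    rw [Real.exp_neg]
    have hkey : 1 ≤ (1 - y) * (1 + 1.1 * y) := by nlinarith
    have hinv : (Real.exp (1.1 * y))⁻¹ ≤ (1 + 1.1 * y)⁻¹ :=
      inv_anti₀ hpos h1
    refine hinv.trans ?_
    rw [inv_eq_one_div, div_le_iff₀ hpos]
    linarith
  have h1y : (0:ℝ) ≤ 1 - y := by linarith
  have step2 : Real.exp (-1.1) ≤ (1 - y) ^ n := by
    have hp : (Real.exp (-(1.1 * y))) ^ n ≤ (1 - y) ^ n :=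
      pow_le_pow_left₀ (Real.exp_pos _).le h2 n
    have heq : Real.exp (-1.1) = (Real.exp (-(1.1 * y))) ^ n := by
      rw [← Real.exp_nat_mul]
      congr 1
      have h : (n:ℝ) * -(1.1 * y) = -(1.1 * ((n:ℝ) * y)) := by ring
      rw [h, hny]; norm_num
    linarith [heq ▸ hp]
  have step1 : (1 - y) ^ n ≤ (1 - x) ^ n :=
    pow_le_pow_left₀ h1y (by linarith) n
  linarith

/-- Erasure of a whole `U/K × M/K` block.  (1) If the block has `A` entries touched by an
information-rich user/item (erased w.p. `1-β` each, `A ≤ ηM/K + ηU/K - η²`) and the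
remaining `B` entries are erased w.p. `1-α` each (`α ≤ β`), the erasure probability
`(1-β)^A (1-α)^B` is at least `(1-β)^(ηM/K+ηU/K-η²) (1-α)^((U/K-η)(M/K-η))`.
(2) If moreover `α ≤ K²/(UM)` and `β ≤ K/(η(M+U)-η²K)`, then for `M` (and `U = Θ(M)`,
`K = O(M/log M)`) sufficiently large this lower bound is at least `e^(-2.2)`. -/
theorem stmt_8 (η : ℕ) (hη : 0 < η) (c : ℝ) (hc : 1 ≤ c) :
    (∀ (U M K A B : ℕ) (α β : ℝ), K ∣ U → K ∣ M → η ≤ U / K → η ≤ M / K →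
      0 ≤ α → α ≤ β → β < 1 →
      A + B = (U / K) * (M / K) → A ≤ η * (M / K) + η * (U / K) - η ^ 2 →
      (1 - β) ^ (η * (M / K) + η * (U / K) - η ^ 2) *
          (1 - α) ^ ((U / K - η) * (M / K - η)) ≤
        (1 - β) ^ A * (1 - α) ^ B) ∧
    ∃ M0 : ℕ, ∀ (U M K : ℕ) (α β : ℝ), M0 ≤ M → M ≤ U → (U : ℝ) ≤ c * M →
      (K : ℝ) * Real.log M ≤ M → K ∣ U → K ∣ M → 0 < K → η ≤ U / K → η ≤ M / K →
      0 ≤ α → α ≤ (K : ℝ) ^ 2 / ((U : ℝ) * M) →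
      0 ≤ β → β ≤ (K : ℝ) / ((η : ℝ) * ((M : ℝ) + U) - (η : ℝ) ^ 2 * K) →
      Real.exp (-2.2) ≤
        (1 - β) ^ (η * (M / K) + η * (U / K) - η ^ 2) *
          (1 - α) ^ ((U / K - η) * (M / K - η)) := by
  constructor
  · -- Part 1
    intro U M K A B α β hKU hKM hu hm hα0 hαβ hβ1 hAB hA
    set u := U / K with hudef
    set m := M / K with hmdef
    have hkey : (η * m + η * u - η ^ 2) + (u - η) * (m - η) = u * m :=
      block_count η u m hu hm
    obtain ⟨d, hd⟩ := Nat.exists_eq_add_of_le hA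
    have hB : B = (u - η) * (m - η) + d := by
      have h2 : A + d + (u - η) * (m - η) = A + B := by rw [← hd, hkey, hAB]
      omega
    have h1 : (0:ℝ) ≤ 1 - β := by linarith
    have h2 : 1 - β ≤ 1 - α := by linarith
    have h3 : (0:ℝ) ≤ 1 - α := le_trans h1 h2
    have hdd : (1 - β) ^ d ≤ (1 - α) ^ d := pow_le_pow_left₀ h1 h2 d
    rw [hd, hB]
    calc (1 - β) ^ (A + d) * (1 - α) ^ ((u - η) * (m - η))
        = ((1 - β) ^ A * (1 - α) ^ ((u - η) * (m - η))) * (1 - β) ^ d := by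
          rw [pow_add]; ring
      _ ≤ ((1 - β) ^ A * (1 - α) ^ ((u - η) * (m - η))) * (1 - α) ^ d := by
          apply mul_le_mul_of_nonneg_left hdd
          exact mul_nonneg (pow_nonneg h1 _) (pow_nonneg h3 _)
      _ = (1 - β) ^ A * (1 - α) ^ ((u - η) * (m - η) + d) := by
          rw [pow_add]; ring
  · -- Part 2
    refine ⟨60000, ?_⟩
    intro U M K α β hM0 hMU hUc hKlog hKU hKM hK hu hm hα0 hα hβ0 hβ
    set u := U / K with hudef
    set m := M / K with hmdef
    have hK0 : (0:ℝ) < K := by exact_mod_cast hK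
    have hM0' : (0:ℝ) < M := by
      have : (60000:ℝ) ≤ M := by exact_mod_cast hM0
      linarith
    have hexp11 : Real.exp 11 ≤ 60000 := by
      have h1 : Real.exp 11 = (Real.exp 1) ^ 11 := by
        rw [← Real.exp_nat_mul]; norm_num
      have h2 : (Real.exp 1) ^ 11 ≤ (2.7182818286:ℝ) ^ 11 :=
        pow_le_pow_left₀ (Real.exp_pos 1).le Real.exp_one_lt_d9.le 11
      have h3 : (2.7182818286:ℝ) ^ 11 ≤ 60000 := by norm_num
      linarith [h1 ▸ (h2.trans h3)]
    have hlogM : (11:ℝ) ≤ Real.log M := by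
      rw [Real.le_log_iff_exp_le hM0']
      have : (60000:ℝ) ≤ M := by exact_mod_cast hM0
      linarith
    have hmR : ((m : ℕ) : ℝ) = (M : ℝ) / K := Nat.cast_div hKM hK0.ne'
    have huR : ((u : ℕ) : ℝ) = (U : ℝ) / K := Nat.cast_div hKU hK0.ne'
    have hm11R : (11:ℝ) ≤ (m : ℝ) := by
      rw [hmR, le_div_iff₀ hK0]
      calc (11:ℝ) * K ≤ Real.log M * K := by nlinarith
        _ = K * Real.log M := by ring
        _ ≤ M := hKlog
    have hm11 : 11 ≤ m := by exact_mod_cast hm11R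
    have hmu : m ≤ u := Nat.div_le_div_right hMU
    have hu11 : 11 ≤ u := le_trans hm11 hmu
    have hηm : η ≤ m := hm
    have hη2 : η ^ 2 ≤ η * m + η * u := by
      calc η ^ 2 = η * η := pow_two η
        _ ≤ η * m := Nat.mul_le_mul_left η hηm
        _ ≤ η * m + η * u := Nat.le_add_right _ _
    have hA'cast : ((η * m + η * u - η ^ 2 : ℕ) : ℝ)
        = (η:ℝ) * m + η * u - (η:ℝ) ^ 2 := by
      push_cast [Nat.cast_sub hη2]; ring
    have hηR : (1:ℝ) ≤ η := by exact_mod_cast hη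
    have hηmR : (η:ℝ) ≤ m := by exact_mod_cast hηm
    have hu11R : (11:ℝ) ≤ u := by exact_mod_cast hu11
    have hA'R : (11:ℝ) ≤ ((η * m + η * u - η ^ 2 : ℕ) : ℝ) := by
      rw [hA'cast]
      nlinarith
    have hA'11 : 11 ≤ η * m + η * u - η ^ 2 := by exact_mod_cast hA'R
    have hMKm : (M:ℝ) = K * m := by rw [hmR]; field_simp
    have hUKu : (U:ℝ) = K * u := by rw [huR]; field_simp
    have hA'pos : (0:ℝ) < ((η * m + η * u - η ^ 2 : ℕ) : ℝ) := by linarith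
    have hβ' : β ≤ 1 / ((η * m + η * u - η ^ 2 : ℕ) : ℝ) := by
      have hden : (η:ℝ) * ((M:ℝ) + U) - (η:ℝ)^2 * K
          = K * ((η * m + η * u - η ^ 2 : ℕ) : ℝ) := by
        rw [hA'cast, hMKm, hUKu]; ring
      have heq : (K:ℝ) / ((η:ℝ) * ((M:ℝ) + U) - (η:ℝ)^2 * K)
          = 1 / ((η * m + η * u - η ^ 2 : ℕ) : ℝ) := by
        have hApos' : (0:ℝ) < (η:ℝ)*m + (η:ℝ)*u - (η:ℝ)^2 := by
          rw [← hA'cast]; exact hA'pos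
        rw [hden, hA'cast, div_eq_div_iff (mul_pos hK0 hApos').ne' hApos'.ne']
        ring
      rw [heq] at hβ; exact hβ
    have hum11 : 11 ≤ u * m := le_trans hu11 (Nat.le_mul_of_pos_right u (by omega))
    have humR : (11:ℝ) ≤ ((u * m : ℕ) : ℝ) := by exact_mod_cast hum11
    have humpos : (0:ℝ) < ((u * m : ℕ) : ℝ) := by linarith
    have hα' : α ≤ 1 / ((u * m : ℕ) : ℝ) := by
      have heq : (K:ℝ)^2 / ((U:ℝ) * M) = 1 / ((u * m : ℕ) : ℝ) := by
        have hu0 : ((u:ℕ):ℝ) ≠ 0 := by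
          have : (11:ℝ) ≤ u := hu11R
          linarith
        have hm0 : ((m:ℕ):ℝ) ≠ 0 := by
          have : (11:ℝ) ≤ m := hm11R
          linarith
        rw [hMKm, hUKu]
        push_cast
        field_simp [hu0, hm0]
      rw [heq] at hα; exact hα
    have hb1 : Real.exp (-1.1) ≤ (1 - β) ^ (η * m + η * u - η ^ 2) :=
      key_pow _ hA'11 β hβ0 hβ'
    have hb2' : Real.exp (-1.1) ≤ (1 - α) ^ (u * m) :=
      key_pow _ hum11 α hα0 hα'
    have hα1 : α ≤ 1 := by
      have h : 1 / ((u*m:ℕ):ℝ) ≤ 1 := by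
        rw [div_le_one humpos]; linarith
      linarith
    have hB'le : (u - η) * (m - η) ≤ u * m :=
      Nat.mul_le_mul (Nat.sub_le _ _) (Nat.sub_le _ _)
    have hb2 : Real.exp (-1.1) ≤ (1 - α) ^ ((u - η) * (m - η)) :=
      le_trans hb2' (pow_le_pow_of_le_one (by linarith) (by linarith) hB'le)
    have hβ1 : β ≤ 1 := by
      have h : 1 / ((η * m + η * u - η ^ 2 : ℕ) : ℝ) ≤ 1 := by
        rw [div_le_one hA'pos]; linarith
      linarith
    calc Real.exp (-2.2) = Real.exp (-1.1) * Real.exp (-1.1) := by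
          rw [← Real.exp_add]; norm_num
      _ ≤ (1 - β) ^ (η * m + η * u - η ^ 2) * (1 - α) ^ ((u - η) * (m - η)) :=
          mul_le_mul hb1 hb2 (Real.exp_pos _).le (pow_nonneg (by linarith) _)
end
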